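/- Let T be a closed symmetric linear relation in a Krein space H with canonical decomposition H = H⁻[⊕]H⁺ and canonical symmetry J, such that H⁻ ⊆ D_T and D_T + R_T is dense in H (i.e. T is of class (LP)). Then the deficiency subspace Σ = T^c ∩ T^⊥ is an operator, every non-real eigenvalue of Σ lies in {i, −i}, and Ker_i Σ = H⁺ ∩ Ker_i(JT^c), Ker_{−i} Σ = H⁺ ∩ Ker_{−i}(JT^c). -/

import Mathlib

open Complex

noncomputable section

variable {H : Type*} [NormedAddCommGroup H] [InnerProductSpace ℂ H] [CompleteSpace H]

/-- Indefinite inner product `[x,y] = ⟪x, J y⟫`. -/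
def kip (J : H →L[ℂ] H) (x y : H) : ℂ := inner ℂ x (J y)

/-- `H⁻ = ker (J + id)`. -/
def negSet (J : H →L[ℂ] H) : Set H := {x | J x = -x}

/-- `H⁺ = ker (J - id)`. -/
def posSet (J : H →L[ℂ] H) : Set H := {x | J x = x}

/-- The canonical projection `P⁻ = (id - J)/2` onto `H⁻`. -/
def Pm (J : H →L[ℂ] H) (x : H) : H := (2⁻¹ : ℂ) • (x - J x)

/-- The canonical projection `P⁺ = (id + J)/2` onto `H⁺`. -/
def Pp (J : H →L[ℂ] H) (x : H) : H := (2⁻¹ : ℂ) • (x + J x)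

/-- `J` is a fundamental symmetry: self-adjoint and an involution. -/
structure IsFundSym (J : H →L[ℂ] H) : Prop where
  symm : ∀ x y : H, (inner ℂ (J x) y : ℂ) = inner ℂ x (J y)
  invol : ∀ x : H, J (J x) = x

def domSet (A : Set (H × H)) : Set H := {x | ∃ y, (x, y) ∈ A}
def ranSet (A : Set (H × H)) : Set H := {y | ∃ x, (x, y) ∈ A}
def mulSet (A : Set (H × H)) : Set H := {y | ((0 : H), y) ∈ A}
def kerl (A : Set (H × H)) (l : ℂ) : Set H := {x | (x, l • x) ∈ A}
def pointSpec (A : Set (H × H)) : Set ℂ := {l | ∃ x : H, x ≠ 0 ∧ (x, l • x) ∈ A}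
/-- The relation `A - l·I`. -/
def shiftRel (A : Set (H × H)) (l : ℂ) : Set (H × H) := {p | ∃ q ∈ A, p = (q.1, q.2 - l • q.1)}
def invRel (A : Set (H × H)) : Set (H × H) := {p | (p.2, p.1) ∈ A}
/-- Composition `A ∘ B` (apply `B` first). -/
def relComp (A B : Set (H × H)) : Set (H × H) := {p | ∃ y, (p.1, y) ∈ B ∧ (y, p.2) ∈ A}
def imageRel (A : Set (H × H)) (M : Set H) : Set H := {y | ∃ x ∈ M, (x, y) ∈ A}
def setSum (A B : Set H) : Set H := {z | ∃ a ∈ A, ∃ b ∈ B, z = a + b}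
/-- The relation `JT = {(x, Jy) : (x,y) ∈ T}`. -/
def JRel (J : H →L[ℂ] H) (A : Set (H × H)) : Set (H × H) := {p | ∃ q ∈ A, p = (q.1, J q.2)}
/-- Krein-space adjoint `T^c`. -/
def adjRel (J : H →L[ℂ] H) (T : Set (H × H)) : Set (H × H) :=
  {q | ∀ p ∈ T, kip J q.2 p.1 = kip J q.1 p.2}
def IsSymRel (J : H →L[ℂ] H) (T : Set (H × H)) : Prop := T ⊆ adjRel J T
def IsDissipative (J : H →L[ℂ] H) (T : Set (H × H)) : Prop := ∀ p ∈ T, 0 ≤ (kip J p.1 p.2).im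
/-- The operator part `T_s = {(x,y) ∈ T : y ⟂ Ind T}`. -/
def opPart (T : Set (H × H)) : Set (H × H) :=
  {p | p ∈ T ∧ ∀ z ∈ mulSet T, (inner ℂ p.2 z : ℂ) = 0}
/-- `‖T_s P⁻‖`: norm of `x ↦ T_s x` as an operator on `H⁻`. -/
def normTsPm (J : H →L[ℂ] H) (T : Set (H × H)) : ℝ :=
  sSup {r | ∃ p ∈ opPart T, p.1 ∈ negSet J ∧ ‖p.1‖ ≤ 1 ∧ r = ‖p.2‖}
/-- `‖P⁻ T_s P⁻‖`: norm of `x ↦ P⁻(T_s x)` as an operator on `H⁻`. -/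
def normPmTsPm (J : H →L[ℂ] H) (T : Set (H × H)) : ℝ :=
  sSup {r | ∃ p ∈ opPart T, p.1 ∈ negSet J ∧ ‖p.1‖ ≤ 1 ∧ r = ‖Pm J p.2‖}
/-- The region `Γ` determined by `m = ‖T_s P⁻‖`, `c = ‖P⁻T_s P⁻‖`. -/
def GammaSet (m c : ℝ) : Set ℂ :=
  {l | l.im ≠ 0 ∧ m < |l.im| ∧
    ‖(if 0 ≤ l.re then (1 : ℂ) else -1) + (c : ℂ) / l‖ < 2 / (1 + (m / |l.im|) ^ 2)}
/-- `C = (ℂ∖ℝ) ∖ Γ`. -/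
def CSet (m c : ℝ) : Set ℂ := {l : ℂ | l.im ≠ 0} \ GammaSet m c

/-- Orthogonal complement of `T` in the Hilbert space `H × H`. -/
def perpRel (T : Set (H × H)) : Set (H × H) :=
  {q | ∀ p ∈ T, (inner ℂ q.1 p.1 : ℂ) + (inner ℂ q.2 p.2 : ℂ) = 0}

/-- The deficiency subspace `Σ = T^c ∩ T^⊥`. -/
def SigmaRel (J : H →L[ℂ] H) (T : Set (H × H)) : Set (H × H) :=
  adjRel J T ∩ perpRel T

/-- `[·,·]`-orthogonal complement of a lineal. -/
def kipOrtho (J : H →L[ℂ] H) (L : Set H) : Set H := {u | ∀ x ∈ L, kip J u x = 0}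

/-- A closed lineal `L` is regular: `L ∩ L^[⊥] = {0}` and `L + L^[⊥] = H`. -/
def IsRegularSub (J : H →L[ℂ] H) (L : Set H) : Prop :=
  L ∩ kipOrtho J L = {0} ∧ setSum L (kipOrtho J L) = Set.univ

/-! For `(x, l • x) ∈ Σ` and `(p, q) ∈ T`, membership in `T^c` and in `T^⊥` read
`conj l ⟪x, J p⟫ = ⟪x, J q⟫` and `⟪x, p⟫ + conj l ⟪x, q⟫ = 0`. Testing both against a pair
`(m, s) ∈ T` with `m = P⁻ x ∈ H⁻ ⊆ D_T` gives `2 ⟪m, s⟫ = (conj l - (conj l)⁻¹) ‖m‖²`. Since `T`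
is symmetric, `⟪m, s⟫ = -[m, s]` is real, whereas `conj l - (conj l)⁻¹` is not when `l ∉ ℝ`;
hence `m = 0`, i.e. eigenvectors of `Σ` for non-real eigenvalues lie in `H⁺`. On `H⁺` the two
equations become `⟪x, q⟫ = conj l ⟪x, p⟫` and `(1 + conj l ^ 2) ⟪x, p⟫ = 0`, so unless `l = ±i`
the vector `x` is orthogonal to the dense set `D_T + R_T`. The same density argument, together
with `J D_T ⊆ D_T` (a consequence of `H⁻ ⊆ D_T`), shows that `Σ` is an operator. -/

open ComplexConjugate
open scoped InnerProductSpace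

set_option linter.unusedSectionVars false

variable {J : H →L[ℂ] H} {S : Set (H × H)} {x y : H} {l : ℂ}

theorem IsFundSym.Pm_mem_negSet (hJ : IsFundSym J) (x : H) : Pm J x ∈ negSet J := by
  change J ((2⁻¹ : ℂ) • (x - J x)) = -((2⁻¹ : ℂ) • (x - J x))
  rw [map_smul, map_sub, hJ.invol, ← smul_neg, neg_sub]

theorem IsFundSym.map_mem_domSet (hJ : IsFundSym J) {T : Submodule ℂ (H × H)}
    (hdom : negSet J ⊆ domSet (T : Set (H × H))) (hx : x ∈ domSet (T : Set (H × H))) :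
    J x ∈ domSet (T : Set (H × H)) := by
  obtain ⟨y, hxy⟩ := hx
  obtain ⟨z, hz⟩ := hdom (hJ.Pm_mem_negSet x)
  have hJx : x - (2 : ℂ) • Pm J x = J x := by
    rw [Pm, smul_smul]
    norm_num
  refine ⟨y - (2 : ℂ) • z, ?_⟩
  rw [← hJx]
  exact T.sub_mem hxy (T.smul_mem (2 : ℂ) hz)

theorem IsSymRel.im_inner_eq_zero (hJ : IsFundSym J) (hS : IsSymRel J S) {v w : H}
    (hv : v ∈ negSet J) (hvw : (v, w) ∈ S) : (⟪v, w⟫_ℂ).im = 0 := by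
  have h : kip J w v = kip J v w := hS hvw (v, w) hvw
  rw [kip, kip, show J v = -v from hv, ← hJ.symm, show J v = -v from hv, inner_neg_right,
    inner_neg_left, neg_inj] at h
  rw [← Complex.conj_eq_iff_im, inner_conj_symm, h]

theorem eq_zero_of_inner_domSet_ranSet
    (hdense : Dense (setSum (domSet S) (ranSet S)))
    (h : ∀ p ∈ S, ⟪y, p.1⟫_ℂ = 0 ∧ ⟪y, p.2⟫_ℂ = 0) : y = 0 := by
  refine hdense.eq_zero_of_inner_left ℂ ?_
  rintro _ ⟨a, ⟨b, hab⟩, c, ⟨d, hdc⟩, rfl⟩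
  rw [inner_add_right, (h _ hab).1, (h _ hdc).2, add_zero]

theorem Complex.im_sub_inv_ne_zero {μ : ℂ} (hμ : μ.im ≠ 0) : (μ - μ⁻¹).im ≠ 0 := by
  have hpos : 0 < Complex.normSq μ := Complex.normSq_pos.mpr (by rintro rfl; simp at hμ)
  have h : (μ - μ⁻¹).im = μ.im * (1 + (Complex.normSq μ)⁻¹) := by
    rw [Complex.sub_im, Complex.inv_im]; ring
  rw [h]
  exact mul_ne_zero hμ (by positivity)

theorem mem_adjRel_smul_iff : (x, l • x) ∈ adjRel J S ↔
    ∀ p ∈ S, conj l * ⟪x, J p.1⟫_ℂ = ⟪x, J p.2⟫_ℂ := by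
  simp only [adjRel, kip, Set.mem_ofPred_eq, inner_smul_left]

theorem mem_perpRel_smul_iff : (x, l • x) ∈ perpRel S ↔
    ∀ p ∈ S, ⟪x, p.1⟫_ℂ + conj l * ⟪x, p.2⟫_ℂ = 0 := by
  simp only [perpRel, Set.mem_ofPred_eq, inner_smul_left]

theorem mem_posSet_of_mem_kerl_SigmaRel (hJ : IsFundSym J) (hS : IsSymRel J S)
    (hdom : negSet J ⊆ domSet S) (hl : l.im ≠ 0) (hx : x ∈ kerl (SigmaRel J S) l) :
    x ∈ posSet J := by
  set m := Pm J x with hm_def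
  have hJm : J m = -m := hJ.Pm_mem_negSet x
  obtain ⟨s, hms⟩ := hdom hJm
  have hA := mem_adjRel_smul_iff.mp hx.1 _ hms
  have hP := mem_perpRel_smul_iff.mp hx.2 _ hms
  have hx_sub : x - J x = (2 : ℂ) • m := by
    rw [hm_def, Pm, smul_smul]; norm_num
  have hxm : ⟪x, m⟫_ℂ = ⟪m, m⟫_ℂ := by
    have h := congrArg (⟪·, m⟫_ℂ) hx_sub
    simp only [inner_sub_left, inner_smul_left, map_ofNat, hJ.symm, hJm, inner_neg_right] at h
    linear_combination h / 2
  have hms2 : 2 * ⟪m, s⟫_ℂ = ⟪x, s⟫_ℂ - ⟪x, J s⟫_ℂ := by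
    have h := congrArg (⟪·, s⟫_ℂ) hx_sub
    simp only [inner_sub_left, inner_smul_left, map_ofNat, hJ.symm] at h
    linear_combination -h
  have hl0 : conj l ≠ 0 := by
    rw [map_ne_zero]; rintro rfl; simp at hl
  have h2ms : 2 * ⟪m, s⟫_ℂ = (conj l - (conj l)⁻¹) * ⟪m, m⟫_ℂ := by
    rw [← hxm]
    rw [hJm, inner_neg_right] at hA
    field_simp
    linear_combination conj l * hms2 + hP + conj l * hA
  have hm0 : m = 0 := by
    have hN : ⟪m, m⟫_ℂ = ((‖m‖ ^ 2 : ℝ) : ℂ) := by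
      rw [inner_self_eq_norm_sq_to_K]; push_cast; rfl
    have h := congrArg Complex.im h2ms
    rw [hN, Complex.im_mul_ofReal, Complex.mul_im, hS.im_inner_eq_zero hJ hJm hms] at h
    have hμ : (conj l).im ≠ 0 := by rwa [Complex.conj_im, neg_ne_zero]
    simp only [Complex.im_ofNat, mul_zero, zero_mul, add_zero] at h
    exact norm_eq_zero.mp (pow_eq_zero_iff two_ne_zero |>.mp
      ((mul_eq_zero.mp h.symm).resolve_left (Complex.im_sub_inv_ne_zero hμ)))
  rw [hm0, smul_zero, sub_eq_zero] at hx_sub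
  exact hx_sub.symm

theorem mem_adjRel_smul_iff_of_mem_posSet (hJ : IsFundSym J) (hx : x ∈ posSet J) :
    (x, l • x) ∈ adjRel J S ↔ ∀ p ∈ S, conj l * ⟪x, p.1⟫_ℂ = ⟪x, p.2⟫_ℂ := by
  have hJx (z : H) : ⟪x, J z⟫_ℂ = ⟪x, z⟫_ℂ := by rw [← hJ.symm, show J x = x from hx]
  simp only [mem_adjRel_smul_iff, hJx]

theorem mem_SigmaRel_smul_iff_of_mem_posSet (hJ : IsFundSym J) (hx : x ∈ posSet J) :
    (x, l • x) ∈ SigmaRel J S ↔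
      (x, l • x) ∈ adjRel J S ∧ ∀ p ∈ S, (1 + conj l ^ 2) * ⟪x, p.1⟫_ℂ = 0 := by
  refine and_congr_right fun hA => ?_
  rw [mem_adjRel_smul_iff_of_mem_posSet hJ hx] at hA
  rw [mem_perpRel_smul_iff]
  refine forall₂_congr fun p hp => ?_
  rw [← hA p hp]
  constructor <;> intro h <;> linear_combination h

theorem mem_kerl_JRel_iff (hJ : IsFundSym J) {A : Set (H × H)} :
    x ∈ kerl (JRel J A) l ↔ (x, l • J x) ∈ A := by
  constructor
  · rintro ⟨⟨a, b⟩, hab, hxab⟩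
    obtain ⟨rfl, hb⟩ := Prod.mk.injEq _ _ _ _ ▸ hxab
    rwa [← map_smul, hb, hJ.invol]
  · intro h
    exact ⟨_, h, by simp only [map_smul, hJ.invol]⟩

theorem eq_zero_of_mk_zero_mem_SigmaRel (hJ : IsFundSym J) {T : Submodule ℂ (H × H)}
    (hdom : negSet J ⊆ domSet (T : Set (H × H)))
    (hdense : Dense (setSum (domSet (T : Set (H × H))) (ranSet (T : Set (H × H)))))
    (hy : ((0 : H), y) ∈ SigmaRel J (T : Set (H × H))) : y = 0 := by
  refine eq_zero_of_inner_domSet_ranSet hdense fun p hp => ⟨?_, ?_⟩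
  · obtain ⟨q, hq⟩ := hJ.map_mem_domSet hdom ⟨p.2, hp⟩
    simpa [kip, hJ.invol] using hy.1 _ hq
  · simpa using hy.2 p hp

theorem eq_I_or_eq_neg_I_of_mem_kerl_SigmaRel (hJ : IsFundSym J) (hS : IsSymRel J S)
    (hdom : negSet J ⊆ domSet S) (hdense : Dense (setSum (domSet S) (ranSet S)))
    (hl : l.im ≠ 0) (hx0 : x ≠ 0) (hx : x ∈ kerl (SigmaRel J S) l) : l = I ∨ l = -I := by
  have hxp := mem_posSet_of_mem_kerl_SigmaRel hJ hS hdom hl hx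
  obtain ⟨hA, hP⟩ := (mem_SigmaRel_smul_iff_of_mem_posSet hJ hxp).mp hx
  rw [mem_adjRel_smul_iff_of_mem_posSet hJ hxp] at hA
  by_contra hne
  have hc : 1 + conj l ^ 2 ≠ 0 := by
    intro h
    have h' : (l - I) * (l + I) = 0 := by
      have := congrArg conj h
      simp only [map_add, map_one, map_pow, Complex.conj_conj, map_zero] at this
      linear_combination this - I_sq
    rcases mul_eq_zero.mp h' with h'' | h''
    · exact hne (Or.inl (sub_eq_zero.mp h''))
    · exact hne (Or.inr (eq_neg_of_add_eq_zero_left h''))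
  refine hx0 (eq_zero_of_inner_domSet_ranSet hdense fun p hp => ?_)
  have h1 : ⟪x, p.1⟫_ℂ = 0 := (mul_eq_zero.mp (hP p hp)).resolve_left hc
  exact ⟨h1, by rw [← hA p hp, h1, mul_zero]⟩

theorem kerl_SigmaRel_eq_of_sq_eq_neg_one (hJ : IsFundSym J) (hS : IsSymRel J S)
    (hdom : negSet J ⊆ domSet S) {e : ℂ} (he : e ^ 2 = -1) :
    kerl (SigmaRel J S) e = posSet J ∩ kerl (JRel J (adjRel J S)) e := by
  have him : e.im ≠ 0 := by
    intro h
    have := congrArg Complex.re he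
    rw [sq, Complex.mul_re, h] at this
    norm_num at this
    nlinarith [sq_nonneg e.re]
  ext x
  constructor
  · intro hx
    have hxp := mem_posSet_of_mem_kerl_SigmaRel hJ hS hdom him hx
    refine ⟨hxp, (mem_kerl_JRel_iff hJ).mpr ?_⟩
    rw [show J x = x from hxp]
    exact hx.1
  · rintro ⟨hxp, hx⟩
    rw [mem_kerl_JRel_iff hJ, show J x = x from hxp] at hx
    refine (mem_SigmaRel_smul_iff_of_mem_posSet hJ hxp).mpr ⟨hx, fun p _ => ?_⟩
    rw [← map_pow, he]
    simp

theorem statement17_general (J : H →L[ℂ] H) (hJ : IsFundSym J)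
    (T : Submodule ℂ (H × H))
    (hTsym : IsSymRel J (T : Set (H × H)))
    (hdom : negSet J ⊆ domSet (T : Set (H × H)))
    (hdense : Dense (setSum (domSet (T : Set (H × H))) (ranSet (T : Set (H × H))))) :
    (∀ y : H, ((0 : H), y) ∈ SigmaRel J (T : Set (H × H)) → y = 0) ∧
    (∀ l : ℂ, l.im ≠ 0 →
      (∃ x : H, x ≠ 0 ∧ (x, l • x) ∈ SigmaRel J (T : Set (H × H))) →
      l = Complex.I ∨ l = -Complex.I) ∧
    kerl (SigmaRel J (T : Set (H × H))) Complex.I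
      = posSet J ∩ kerl (JRel J (adjRel J (T : Set (H × H)))) Complex.I ∧
    kerl (SigmaRel J (T : Set (H × H))) (-Complex.I)
      = posSet J ∩ kerl (JRel J (adjRel J (T : Set (H × H)))) (-Complex.I) := by
  have hsq : (-I) ^ 2 = -1 := by rw [neg_sq, I_sq]
  exact ⟨fun _ hy => eq_zero_of_mk_zero_mem_SigmaRel hJ hdom hdense hy,
    fun _ hl ⟨_, hx0, hx⟩ => eq_I_or_eq_neg_I_of_mem_kerl_SigmaRel hJ hTsym hdom hdense hl hx0 hx,
    kerl_SigmaRel_eq_of_sq_eq_neg_one hJ hTsym hdom I_sq,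
    kerl_SigmaRel_eq_of_sq_eq_neg_one hJ hTsym hdom hsq⟩

/-- Proposition 5.2: for `T` of class (LP), the deficiency subspace `Σ` is an
operator whose non-real eigenvalues lie in `{i, −i}`, with
`Ker_{±i} Σ = H⁺ ∩ Ker_{±i} JT^c`. -/
theorem statement17 (J : H →L[ℂ] H) (hJ : IsFundSym J)
    (T : Submodule ℂ (H × H))
    (hTclosed : IsClosed (T : Set (H × H)))
    (hTsym : IsSymRel J (T : Set (H × H)))
    (hdom : negSet J ⊆ domSet (T : Set (H × H)))
    (hdense : Dense (setSum (domSet (T : Set (H × H))) (ranSet (T : Set (H × H))))) :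
    (∀ y : H, ((0 : H), y) ∈ SigmaRel J (T : Set (H × H)) → y = 0) ∧
    (∀ l : ℂ, l.im ≠ 0 →
      (∃ x : H, x ≠ 0 ∧ (x, l • x) ∈ SigmaRel J (T : Set (H × H))) →
      l = Complex.I ∨ l = -Complex.I) ∧
    kerl (SigmaRel J (T : Set (H × H))) Complex.I
      = posSet J ∩ kerl (JRel J (adjRel J (T : Set (H × H)))) Complex.I ∧
    kerl (SigmaRel J (T : Set (H × H))) (-Complex.I)
      = posSet J ∩ kerl (JRel J (adjRel J (T : Set (H × H)))) (-Complex.I) :=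
  statement17_general J hJ T hTsym hdom hdense
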